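/- For every μ > 0 and ξ ∈ ℝ, ∫_ℝ e^{-μ cosh y} e^{i ξ sinh(x+y)} dy = ∫_0^∞ (1/v) exp(-1/(2v)) exp(-(μ² + ξ²) v / 2) e^{i μ ξ v sinh x} dv for all x ∈ ℝ. In particular, for μ, ξ > 0 the function (μ, ξ, x) ↦ ∫_ℝ e^{-μ cosh y} e^{i ξ sinh(x+y)} dy is symmetric in μ and ξ. -/

import Mathlib

/-!
With `p = (μ - iξeˣ)/2` and `q = (μ + iξe⁻ˣ)/2` the left-hand side is
`K(p, q) = ∫ exp(-p eʸ - q e⁻ʸ) dy`. The substitutions `y ↦ -y` and `y ↦ y - log c` show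
`K(p, q) = K(q, p) = K(cp, q/c)` for `c > 0`, so for real `q > 0` we get
`K(p, q) = K(2pq, 1/2)`. Both sides are holomorphic in `q` on the convex region
`Re q > 0, Re (pq) > 0`, so the identity persists there. Substituting `v = eʸ` in `K(2pq, 1/2)`
gives the right-hand side, since `2pq = (μ² + ξ²)/2 - iμξ sinh x`, which is symmetric
in `μ` and `ξ`.
-/

open MeasureTheory Real Set Filter Topology
open scoped Complex

theorem eqOn_of_analyticOnNhd_of_eventually_eq_ofReal {E : Type*} [NormedAddCommGroup E]
    [NormedSpace ℂ E] {f g : ℂ → E} {U : Set ℂ} (hf : AnalyticOnNhd ℂ f U)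
    (hg : AnalyticOnNhd ℂ g U) (hU : IsPreconnected U) {x₀ : ℝ} (hx₀ : (x₀ : ℂ) ∈ U)
    (hfg : ∀ᶠ x : ℝ in 𝓝 x₀, f x = g x) : EqOn f g U := by
  have hofReal : Tendsto ((↑) : ℝ → ℂ) (𝓝[≠] x₀) (𝓝[≠] (x₀ : ℂ)) :=
    Complex.continuous_ofReal.continuousWithinAt.tendsto_nhdsWithin
      fun x hx ↦ Complex.ofReal_injective.ne hx
  exact hf.eqOn_of_preconnected_of_frequently_eq hg hU hx₀
    (hofReal.frequently (hfg.filter_mono nhdsWithin_le_nhds).frequently)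

theorem sq_le_two_mul_exp_add_exp_neg (y : ℝ) : y ^ 2 ≤ 2 * (rexp y + rexp (-y)) := by
  have h := pow_div_factorial_le_exp _ (abs_nonneg y) 2
  rw [sq_abs, Nat.factorial_two, Nat.cast_ofNat] at h
  rcases abs_choice y with hy | hy <;> rw [hy] at h <;> linarith [exp_pos y, exp_pos (-y)]

theorem integrable_exp_neg_mul_exp_sub_mul_exp_neg {a b : ℝ} (ha : 0 < a) (hb : 0 < b) :
    Integrable fun y : ℝ ↦ rexp (-(a * rexp y) - b * rexp (-y)) := by
  set m := min a b
  refine (integrable_exp_neg_mul_sq (b := m / 2) (by positivity)).mono'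
    (by fun_prop) (ae_of_all _ fun y ↦ ?_)
  rw [norm_of_nonneg (exp_pos _).le, exp_le_exp]
  have hsq := sq_le_two_mul_exp_add_exp_neg y
  have hma : m * rexp y ≤ a * rexp y := by gcongr; exact min_le_left a b
  have hmb : m * rexp (-y) ≤ b * rexp (-y) := by gcongr; exact min_le_right a b
  nlinarith [lt_min ha hb]

theorem mul_exp_neg_mul_le_inv {c : ℝ} (hc : 0 < c) (u : ℝ) :
    u * rexp (-(c * u)) ≤ c⁻¹ := by
  rw [exp_neg, ← div_eq_mul_inv, div_le_iff₀ (exp_pos _), ← div_eq_inv_mul,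
    le_div_iff₀ hc, mul_comm]
  linarith [add_one_le_exp (c * u)]

noncomputable def kIntegrand (p q : ℂ) (y : ℝ) : ℂ := cexp (-(p * rexp y) - q * rexp (-y))

noncomputable def kIntegral (p q : ℂ) : ℂ := ∫ y : ℝ, kIntegrand p q y

namespace kIntegrand

@[fun_prop]
theorem continuous (p q : ℂ) : Continuous (kIntegrand p q) := by
  unfold kIntegrand; fun_prop

theorem norm_eq (p q : ℂ) (y : ℝ) :
    ‖kIntegrand p q y‖ = rexp (-(p.re * rexp y) - q.re * rexp (-y)) := by
  simp [kIntegrand, Complex.norm_exp, -Complex.ofReal_exp]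

theorem integrable {p q : ℂ} (hp : 0 < p.re) (hq : 0 < q.re) : Integrable (kIntegrand p q) :=
  (integrable_exp_neg_mul_exp_sub_mul_exp_neg hp hq).mono'
    (continuous p q).aestronglyMeasurable (ae_of_all _ fun y ↦ (norm_eq p q y).le)

theorem hasDerivAt_snd (p q : ℂ) (y : ℝ) :
    HasDerivAt (fun q ↦ kIntegrand p q y) (-rexp (-y) * kIntegrand p q y) q := by
  have h : HasDerivAt (fun q : ℂ ↦ -(p * rexp y) - q * rexp (-y)) (-rexp (-y)) q := by
    simpa using ((hasDerivAt_id q).mul_const (rexp (-y) : ℂ)).const_sub (-(p * rexp y))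
  simpa [kIntegrand, mul_comm] using h.cexp

end kIntegrand

theorem kIntegral_comm (p q : ℂ) : kIntegral p q = kIntegral q p := by
  rw [kIntegral, ← integral_neg_eq_self]
  simp only [kIntegrand, neg_neg, kIntegral]
  congr 1; ext y; ring_nf

theorem kIntegral_mul_div {c : ℝ} (hc : 0 < c) (p q : ℂ) :
    kIntegral (c * p) (q / c) = kIntegral p q := by
  rw [kIntegral, kIntegral, ← integral_add_right_eq_self _ (-log c)]
  congr 1; ext y
  have hc' : (c : ℂ) ≠ 0 := by exact_mod_cast hc.ne'
  simp only [kIntegrand, neg_add, neg_neg, exp_add, exp_neg, exp_log hc]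
  congr 1
  push_cast [-Complex.ofReal_exp]
  field_simp

theorem differentiableAt_kIntegral_snd {p q : ℂ} (hp : 0 < p.re) (hq : 0 < q.re) :
    DifferentiableAt ℂ (kIntegral p) q := by
  set ε := q.re / 2
  have hε : 0 < ε := by positivity
  have re_gt : ∀ q' ∈ Metric.ball q ε, ε < q'.re := fun q' hq' ↦ by
    have := (Complex.abs_re_le_norm (q' - q)).trans_lt (mem_ball_iff_norm.mp hq')
    rw [Complex.sub_re, abs_lt] at this
    linarith [show ε = q.re / 2 from rfl]
  have h_bound : ∀ y : ℝ, ∀ q' ∈ Metric.ball q ε, ‖-rexp (-y) * kIntegrand p q' y‖ ≤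
      (ε / 2)⁻¹ * rexp (-(p.re * rexp y) - ε / 2 * rexp (-y)) := fun y q' hq' ↦ by
    have hq'ε : ε * rexp (-y) ≤ q'.re * rexp (-y) := by gcongr; exact (re_gt q' hq').le
    calc ‖-rexp (-y) * kIntegrand p q' y‖
        = rexp (-y) * rexp (-(p.re * rexp y) - q'.re * rexp (-y)) := by
          rw [norm_mul, norm_neg, kIntegrand.norm_eq, Complex.norm_real,
            norm_of_nonneg (exp_pos _).le]
      _ ≤ rexp (-y) * rexp (-(p.re * rexp y) - ε * rexp (-y)) := by gcongr
      _ = rexp (-y) * rexp (-(ε / 2 * rexp (-y))) *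
            rexp (-(p.re * rexp y) - ε / 2 * rexp (-y)) := by
          simp only [← exp_add]; ring_nf
      _ ≤ (ε / 2)⁻¹ * rexp (-(p.re * rexp y) - ε / 2 * rexp (-y)) := by
          gcongr; exact mul_exp_neg_mul_le_inv (by positivity) _
  exact (hasDerivAt_integral_of_dominated_loc_of_deriv_le (Metric.ball_mem_nhds q hε)
    (.of_forall fun q' ↦ (kIntegrand.continuous p q').aestronglyMeasurable)
    (kIntegrand.integrable hp hq) (by fun_prop : Continuous _).aestronglyMeasurable
    (ae_of_all _ h_bound)
    ((integrable_exp_neg_mul_exp_sub_mul_exp_neg hp (half_pos hε)).const_mul _)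
    (ae_of_all _ fun y q' _ ↦ kIntegrand.hasDerivAt_snd p q' y)).2.differentiableAt

theorem kIntegral_eq_kIntegral_mul_mul {p q : ℂ} (hp : 0 < p.re) (hq : 0 < q.re)
    (hpq : 0 < (p * q).re) : kIntegral p q = kIntegral (2 * p * q) (1 / 2) := by
  let U : Set ℂ := {z | 0 < z.re} ∩ {z | 0 < (p * z).re}
  have hU_open : IsOpen U :=
    (isOpen_lt continuous_const Complex.continuous_re).inter
      (isOpen_lt continuous_const (by fun_prop))
  have hU_conv : Convex ℝ U :=
    (convex_halfSpace_re_gt 0).inter ((convex_halfSpace_re_gt 0).linear_preimage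
      ((LinearMap.mulLeft ℂ p).restrictScalars ℝ))
  have hf : AnalyticOnNhd ℂ (kIntegral p) U :=
    DifferentiableOn.analyticOnNhd (fun z hz ↦
      (differentiableAt_kIntegral_snd hp hz.1).differentiableWithinAt) hU_open
  have hg : AnalyticOnNhd ℂ (fun z ↦ kIntegral (1 / 2) (2 * p * z)) U := by
    refine DifferentiableOn.analyticOnNhd (fun z hz ↦ ?_) hU_open
    have h2pz : 0 < (2 * p * z).re := by
      simpa [mul_assoc, Complex.mul_re] using hz.2
    exact ((differentiableAt_kIntegral_snd (by norm_num) h2pz).comp z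
      (by fun_prop)).differentiableWithinAt
  have h_real : ∀ᶠ r : ℝ in 𝓝 1, kIntegral p r = kIntegral (1 / 2) (2 * p * r) :=
    (eventually_gt_nhds one_pos).mono fun r hr ↦ by
      have hr' : (r : ℂ) ≠ 0 := by exact_mod_cast hr.ne'
      rw [kIntegral_comm (1 / 2), ← kIntegral_mul_div (mul_pos two_pos hr) p r]
      congr 1 <;> push_cast <;> field_simp
  have h_eq := eqOn_of_analyticOnNhd_of_eventually_eq_ofReal hf hg hU_conv.isPreconnected
    (x₀ := 1) (by simpa [U] using hp) h_real
  exact (h_eq ⟨hq, hpq⟩).trans (kIntegral_comm _ _)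

theorem integral_Ioi_exp_div_eq_kIntegral (p q : ℂ) :
    ∫ t in Ioi (0 : ℝ), cexp (-(p * t) - q / t) / t = kIntegral p q := by
  have h := integral_image_eq_integral_abs_deriv_smul MeasurableSet.univ
    (fun y _ ↦ (hasDerivAt_exp y).hasDerivWithinAt) exp_injective.injOn
    (fun t : ℝ ↦ cexp (-(p * t) - q / t) / t)
  rw [image_univ, range_exp, Measure.restrict_univ] at h
  rw [h, kIntegral]
  congr 1; ext y
  have hy : (rexp y : ℂ) ≠ 0 := by exact_mod_cast (exp_pos y).ne'
  rw [abs_of_pos (exp_pos y), Complex.real_smul, kIntegrand, exp_neg]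
  push_cast [-Complex.ofReal_exp]
  field_simp

theorem integral_exp_neg_mul_cosh_mul_exp_sinh {μ : ℝ} (hμ : 0 < μ) (ξ x : ℝ) :
    ∫ y : ℝ, cexp (-((μ * cosh y : ℝ) : ℂ)) *
        cexp (Complex.I * ((ξ * sinh (x + y) : ℝ) : ℂ))
      = ∫ v in Ioi (0 : ℝ), (1 / (v : ℂ)) * cexp (-((1 / (2 * v) : ℝ) : ℂ)) *
          cexp (-(((μ ^ 2 + ξ ^ 2) * v / 2 : ℝ) : ℂ)) *
          cexp (Complex.I * ((μ * ξ * v * sinh x : ℝ) : ℂ)) := by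
  set p : ℂ := μ / 2 - ξ * rexp x / 2 * Complex.I
  set q : ℂ := μ / 2 + ξ * rexp (-x) / 2 * Complex.I
  have hp : p.re = μ / 2 := by simp [p, -Complex.ofReal_exp]
  have hq : q.re = μ / 2 := by simp [q, -Complex.ofReal_exp]
  have h2pq : 2 * p * q = ((μ ^ 2 + ξ ^ 2) / 2 : ℝ) - (μ * ξ * sinh x : ℝ) * Complex.I := by
    have hexp : (rexp x : ℂ) * rexp (-x) = 1 := by
      rw [← Complex.ofReal_mul, ← exp_add, add_neg_cancel, exp_zero, Complex.ofReal_one]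
    simp only [p, q, sinh_eq]
    push_cast [-Complex.ofReal_exp]
    linear_combination (-(ξ ^ 2 / 2) * Complex.I ^ 2) * hexp - ξ ^ 2 / 2 * Complex.I_sq
  have hpq : 0 < (p * q).re := by
    rw [show p * q = 2 * p * q / 2 by ring, h2pq, Complex.div_ofNat_re, Complex.sub_re,
      Complex.ofReal_re, Complex.re_ofReal_mul, Complex.I_re, mul_zero, sub_zero]
    positivity
  have hL : ∫ y : ℝ, cexp (-((μ * cosh y : ℝ) : ℂ)) *
      cexp (Complex.I * ((ξ * sinh (x + y) : ℝ) : ℂ)) = kIntegral p q := by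
    refine integral_congr_ae (ae_of_all _ fun y ↦ ?_)
    dsimp only
    rw [kIntegrand, ← Complex.exp_add]
    congr 1
    simp only [p, q, cosh_eq, sinh_eq, neg_add, exp_add]
    push_cast [-Complex.ofReal_exp]
    ring
  have hR : ∫ v in Ioi (0 : ℝ), (1 / (v : ℂ)) * cexp (-((1 / (2 * v) : ℝ) : ℂ)) *
      cexp (-(((μ ^ 2 + ξ ^ 2) * v / 2 : ℝ) : ℂ)) *
      cexp (Complex.I * ((μ * ξ * v * sinh x : ℝ) : ℂ)) = kIntegral (2 * p * q) (1 / 2) := by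
    rw [← integral_Ioi_exp_div_eq_kIntegral]
    refine setIntegral_congr_fun measurableSet_Ioi fun v hv ↦ ?_
    have hv : (v : ℂ) ≠ 0 := by exact_mod_cast (mem_Ioi.mp hv).ne'
    rw [mul_assoc, mul_assoc, ← Complex.exp_add, ← Complex.exp_add, h2pq, one_div_mul_eq_div]
    congr 2
    push_cast
    field_simp
    ring
  rw [hL, hR, kIntegral_eq_kIntegral_mul_mul (by rw [hp]; positivity) (by rw [hq]; positivity)
    hpq]

theorem stmt_2 (μ ξ : ℝ) (hμ : 0 < μ) :
    (∀ x : ℝ,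
      ∫ y : ℝ,
          Complex.exp (-((μ * Real.cosh y : ℝ) : ℂ)) *
            Complex.exp (Complex.I * ((ξ * Real.sinh (x + y) : ℝ) : ℂ))
        = ∫ v in Ioi (0:ℝ),
            (1 / (v : ℂ)) * Complex.exp (-((1 / (2 * v) : ℝ) : ℂ)) *
              Complex.exp (-(((μ ^ 2 + ξ ^ 2) * v / 2 : ℝ) : ℂ)) *
              Complex.exp (Complex.I * ((μ * ξ * v * Real.sinh x : ℝ) : ℂ)))
    ∧ (0 < ξ → ∀ x : ℝ,
      ∫ y : ℝ,
          Complex.exp (-((μ * Real.cosh y : ℝ) : ℂ)) *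
            Complex.exp (Complex.I * ((ξ * Real.sinh (x + y) : ℝ) : ℂ))
        = ∫ y : ℝ,
          Complex.exp (-((ξ * Real.cosh y : ℝ) : ℂ)) *
            Complex.exp (Complex.I * ((μ * Real.sinh (x + y) : ℝ) : ℂ))) := by
  refine ⟨integral_exp_neg_mul_cosh_mul_exp_sinh hμ ξ, fun hξ x ↦ ?_⟩
  rw [integral_exp_neg_mul_cosh_mul_exp_sinh hμ ξ x,
    integral_exp_neg_mul_cosh_mul_exp_sinh hξ μ x]
  simp only [add_comm (ξ ^ 2), mul_comm ξ μ]
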